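/- Let λ be a partition of n ≥ 2 and q = λ₁/n. Then c_{λ'} ≤ (n/(n−1))·(1−q), where c_{λ'} = (1/2)[1 + Σᵢ λ'ᵢ(λ'ᵢ−1)/(n(n−1)) − Σᵢ λᵢ(λᵢ−1)/(n(n−1))]. -/

import Mathlib

open Finset

/-- `c_{λ'} = (1/2)[1 + Σᵢ λ'ᵢ(λ'ᵢ−1)/(n(n−1)) − Σᵢ λᵢ(λᵢ−1)/(n(n−1))]`, where
`λᵢ = μ.rowLen i`, `λ'ᵢ = μ.colLen i` and `n = μ.card`. -/
noncomputable def cB (μ : YoungDiagram) : ℝ :=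
  (1 / 2) *
    (1 + (∑ i ∈ Finset.range μ.card, (μ.colLen i : ℝ) * ((μ.colLen i : ℝ) - 1)) /
        (μ.card * ((μ.card : ℝ) - 1))
      - (∑ i ∈ Finset.range μ.card, (μ.rowLen i : ℝ) * ((μ.rowLen i : ℝ) - 1)) /
        (μ.card * ((μ.card : ℝ) - 1)))

/-!
Write `a = λ₁`. The first row contributes `a(a-1)` to `Σ λᵢ(λᵢ-1)`. The diagram has exactly `a`
nonempty columns, of total length `n`; with `yⱼ = λ'ⱼ - 1 ≥ 0` and `Σ yⱼ = n - a` we get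
`Σ λ'ⱼ(λ'ⱼ-1) = Σ yⱼ² + Σ yⱼ ≤ (n-a)² + (n-a)`. Hence the difference of the two sums is at most
`(n-a)(n-a+1) - a(a-1) = n(n+1-2a)`, and `c_{λ'} ≤ (n-a)/(n-1) = (n/(n-1))(1-q)`.
-/

theorem Finset.sum_mul_sub_one_le_of_one_le {ι R : Type*} [CommRing R] [PartialOrder R]
    [IsOrderedRing R] (s : Finset ι) {x : ι → R} (hx : ∀ i ∈ s, 1 ≤ x i) :
    ∑ i ∈ s, x i * (x i - 1) ≤ (∑ i ∈ s, x i - #s) * (∑ i ∈ s, x i - #s + 1) := by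
  have hsum : ∑ i ∈ s, (x i - 1) = ∑ i ∈ s, x i - #s := by
    simp [sum_sub_distrib]
  have hsq : ∑ i ∈ s, (x i - 1) ^ 2 ≤ (∑ i ∈ s, (x i - 1)) ^ 2 :=
    sum_sq_le_sq_sum_of_nonneg fun i hi => sub_nonneg.mpr (hx i hi)
  calc ∑ i ∈ s, x i * (x i - 1) = ∑ i ∈ s, (x i - 1) ^ 2 + ∑ i ∈ s, (x i - 1) := by
        rw [← sum_add_distrib]; exact sum_congr rfl fun i _ => by ring
    _ ≤ (∑ i ∈ s, (x i - 1)) ^ 2 + ∑ i ∈ s, (x i - 1) := by gcongr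
    _ = _ := by rw [hsum]; ring

theorem Nat.cast_mul_cast_sub_one_nonneg {R : Type*} [Ring R] [PartialOrder R] [IsOrderedRing R]
    (m : ℕ) : (0 : R) ≤ m * (m - 1) := by
  rcases m with _ | m
  · simp
  · simpa using mul_nonneg (Nat.cast_nonneg (α := R) (m + 1)) (Nat.cast_nonneg m)

namespace YoungDiagram

variable (μ : YoungDiagram)

theorem rowLen_le_card (i : ℕ) : μ.rowLen i ≤ μ.card := by
  rw [μ.rowLen_eq_card]
  exact card_le_card (filter_subset _ _)

variable {μ}

theorem lt_rowLen_zero_of_mem {c : ℕ × ℕ} (hc : c ∈ μ) : c.2 < μ.rowLen 0 :=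
  (mem_iff_lt_rowLen.mp hc).trans_le (μ.rowLen_anti 0 c.1 c.1.zero_le)

theorem colLen_pos_iff {j : ℕ} : 0 < μ.colLen j ↔ j < μ.rowLen 0 := by
  rw [← mem_iff_lt_colLen, mem_iff_lt_rowLen]

variable (μ)

theorem sum_colLen_eq_card : ∑ j ∈ range (μ.rowLen 0), μ.colLen j = μ.card := by
  rw [YoungDiagram.card, card_eq_sum_card_fiberwise (f := Prod.snd) (t := range (μ.rowLen 0))
    fun c hc => mem_range.mpr (lt_rowLen_zero_of_mem hc)]
  exact sum_congr rfl fun j _ => μ.colLen_eq_card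

theorem sum_range_card_colLen {M : Type*} [AddCommMonoid M] {f : ℕ → M} (hf : f 0 = 0) :
    ∑ j ∈ range μ.card, f (μ.colLen j) = ∑ j ∈ range (μ.rowLen 0), f (μ.colLen j) := by
  refine (sum_subset (range_subset_range.mpr (μ.rowLen_le_card 0)) fun j _ hj => ?_).symm
  rw [Nat.eq_zero_of_not_pos (mt colLen_pos_iff.mp (by simpa using hj)), hf]

theorem sum_colLen_mul_sub_one_le :
    ∑ j ∈ range μ.card, (μ.colLen j : ℝ) * (μ.colLen j - 1) ≤
      (μ.card - μ.rowLen 0) * (μ.card - μ.rowLen 0 + 1) := by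
  rw [μ.sum_range_card_colLen (f := fun m : ℕ => (m : ℝ) * (m - 1)) (by simp)]
  have hsum : ∑ j ∈ range (μ.rowLen 0), (μ.colLen j : ℝ) = μ.card := by
    exact_mod_cast μ.sum_colLen_eq_card
  simpa [hsum] using sum_mul_sub_one_le_of_one_le (range (μ.rowLen 0))
    fun j hj => (Nat.one_le_cast (α := ℝ)).mpr (colLen_pos_iff.mpr (mem_range.mp hj))

theorem rowLen_zero_mul_sub_one_le (h : 0 < μ.card) :
    (μ.rowLen 0 : ℝ) * (μ.rowLen 0 - 1) ≤
      ∑ i ∈ range μ.card, (μ.rowLen i : ℝ) * (μ.rowLen i - 1) :=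
  single_le_sum (f := fun i => (μ.rowLen i : ℝ) * (μ.rowLen i - 1))
    (fun _ _ => Nat.cast_mul_cast_sub_one_nonneg _) (mem_range.mpr h)

end YoungDiagram

/-- `c_{λ'} ≤ (n/(n−1))·(1−q)` where `q = λ₁/n`. -/
theorem c_conj_upper_bound (μ : YoungDiagram) (n : ℕ) (hn : μ.card = n) (h2 : 2 ≤ n)
    (q : ℝ) (hq : q = (μ.rowLen 0 : ℝ) / n) :
    cB μ ≤ ((n : ℝ) / ((n : ℝ) - 1)) * (1 - q) := by
  subst hn hq
  have hA := μ.sum_colLen_mul_sub_one_le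
  have hB := μ.rowLen_zero_mul_sub_one_le (by omega)
  have hN : (2 : ℝ) ≤ μ.card := by exact_mod_cast h2
  rw [cB, ← sub_nonneg]
  set A := ∑ j ∈ range μ.card, (μ.colLen j : ℝ) * (μ.colLen j - 1)
  set B := ∑ i ∈ range μ.card, (μ.rowLen i : ℝ) * (μ.rowLen i - 1)
  set a : ℝ := (μ.rowLen 0 : ℝ)
  set N : ℝ := (μ.card : ℝ)
  have hN1 : N - 1 ≠ 0 := by linarith
  have hkey : N / (N - 1) * (1 - a / N) - 1 / 2 * (1 + A / (N * (N - 1)) - B / (N * (N - 1))) =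
      (N * (N + 1 - 2 * a) - (A - B)) / (2 * N * (N - 1)) := by
    field_simp
    ring
  rw [hkey]
  -- `(N-a)(N-a+1) - a(a-1) = N(N+1-2a)`
  exact div_nonneg (by nlinarith) (by nlinarith)
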